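/- Let ((g,[2]),D) be a ResLieDer pair over F and assume that every 2-cocycle of ((g,[2]),D) with adjoint coefficients is a 2-coboundary. Then ((g,[2]),D) is rigid: for every 1-parameter formal deformation (μ_i, σ_i, D_i)_{i≥0} of ((g,[2]),D) there exists a family of F-linear maps π_i : g → g (i ≥ 0) with π₀ = id such that for every k ≥ 0 and all x,y ∈ g: Σ_{i+j=k} π_i(μ_j(x,y)) = Σ_{i+j=k} [π_i(x),π_j(y)]; Σ_{i+j=k} π_i(σ_j(x)) = Σ_{2i=k} (π_i(x))^[2] + Σ_{i<j, i+j=k} [π_i(x),π_j(x)]; Σ_{i+j=k} π_i(D_j(x)) = D(π_k(x)). -/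

import Mathlib

/-!
The trivialization `π` is built order by order. Suppose `π₀ = id, π₁, …, π_{k-1}` satisfy the
three equations in all orders below `k`, and put `π_k = 0`. In characteristic 2 the failure of
the equations at order `k` is measured by the sums of their two sides, a triple `(Φ, Ω, Ψ)`.
Applying the `π_i` to the identities of the deformation at the orders `≤ k` and expanding with
the equations of lower order, everything except `(Φ, Ω, Ψ)` cancels by the Jacobi identity, the
identity `[x^[2], y] = [x, [x, y]]` and the derivation rules of `D`; what remains says that
`(Φ, Ω, Ψ)` is a 2-cocycle with adjoint coefficients. By hypothesis it is the coboundary of some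
`P`, and since replacing `π_k = 0` by `P` changes `(Φ, Ω, Ψ)` by exactly the coboundary of `P`,
the choice `π_k = P` satisfies the equations at order `k`.
-/

open Finset HasAntidiagonal Function

section Antidiagonal

variable {M : Type*} [AddCommMonoid M]

theorem sum_antidiagonal_sum_antidiagonal_rotate (k : ℕ) (f : ℕ → ℕ → ℕ → M) :
    ∑ p ∈ antidiagonal k, ∑ q ∈ antidiagonal p.2, f p.1 q.1 q.2 =
      ∑ p ∈ antidiagonal k, ∑ q ∈ antidiagonal p.2, f q.1 q.2 p.1 := by
  rw [sum_sigma', sum_sigma']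
  refine sum_nbij' (fun t => ⟨(t.2.2, t.1.1 + t.2.1), (t.1.1, t.2.1)⟩)
    (fun t => ⟨(t.2.1, t.2.2 + t.1.1), (t.2.2, t.1.1)⟩) ?_ ?_ ?_ ?_ ?_ <;>
  rintro ⟨⟨a, b⟩, ⟨c, d⟩⟩ h <;>
  simp only [mem_sigma, HasAntidiagonal.mem_antidiagonal, and_true] at h ⊢
  · omega
  · omega
  all_goals obtain ⟨rfl, rfl⟩ := h; rfl

theorem sum_antidiagonal_sum_antidiagonal_swap (k : ℕ) (f : ℕ → ℕ → ℕ → M) :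
    ∑ p ∈ antidiagonal k, ∑ q ∈ antidiagonal p.2, f p.1 q.1 q.2 =
      ∑ p ∈ antidiagonal k, ∑ q ∈ antidiagonal p.2, f q.1 p.1 q.2 := by
  rw [sum_antidiagonal_sum_antidiagonal_rotate,
    sum_antidiagonal_sum_antidiagonal_rotate k fun a b c => f b a c]
  exact sum_congr rfl fun p _ => (Nat.sum_antidiagonal_swap (f := fun q => f q.1 q.2 p.1)).symm

theorem sum_antidiagonal_eq_of_snd_lt {k : ℕ} {f : ℕ × ℕ → M}
    (h : ∀ p ∈ antidiagonal k, p.2 < k → f p = 0) : ∑ p ∈ antidiagonal k, f p = f (0, k) :=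
  sum_eq_single_of_mem _ (by simp) fun p hp hne =>
    h p hp (by rw [HasAntidiagonal.mem_antidiagonal] at hp; grind)

theorem sum_antidiagonal_eq_ends {k : ℕ} (hk : k ≠ 0) {f : ℕ × ℕ → M}
    (h : ∀ p ∈ antidiagonal k, p.1 < k → p.2 < k → f p = 0) :
    ∑ p ∈ antidiagonal k, f p = f (k, 0) + f (0, k) := by
  rw [← sum_pair (by simp [hk])]
  have hends : {(k, 0), (0, k)} ⊆ antidiagonal k := by
    intro p hp
    rcases mem_insert.mp hp with rfl | hp <;> simp_all
  refine (sum_subset hends fun p hp hne => h p hp ?_ ?_).symm <;>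
  · simp only [HasAntidiagonal.mem_antidiagonal, mem_insert, mem_singleton] at hp hne
    obtain ⟨a, b⟩ := p
    simp only [Prod.mk.injEq] at hp hne ⊢
    omega

theorem sum_antidiagonal_eq_diag_add_pairs (k : ℕ) (f : ℕ → ℕ → M) :
    ∑ p ∈ antidiagonal k, f p.1 p.2 =
      (∑ i ∈ range (k + 1), if 2 * i = k then f i i else 0) +
        ∑ i ∈ range (k + 1), ∑ j ∈ range (k + 1),
          if i < j ∧ i + j = k then f i j + f j i else 0 := by
  have hsplit : ∀ i j, (if i + j = k then f i j else 0) =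
      ((if i = j then if 2 * i = k then f i i else 0 else 0) +
        if i < j ∧ i + j = k then f i j else 0) + if j < i ∧ j + i = k then f i j else 0 := by
    intro i j
    rcases lt_trichotomy i j with h | rfl | h <;> split_ifs <;> first | omega | simp
  have hgrid : ∑ p ∈ antidiagonal k, f p.1 p.2 =
      ∑ i ∈ range (k + 1), ∑ j ∈ range (k + 1), if i + j = k then f i j else 0 := by
    rw [← sum_product', ← sum_filter]
    refine sum_congr (ext fun p => ?_) fun _ _ => rfl
    simp only [HasAntidiagonal.mem_antidiagonal, mem_filter, mem_product, mem_range]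
    omega
  simp only [hgrid, hsplit, sum_add_distrib, sum_ite_eq, mem_range]
  rw [sum_comm (f := fun i j => if j < i ∧ j + i = k then f i j else 0), add_assoc,
    ← sum_add_distrib]
  congr 1
  · exact sum_congr rfl fun i hi => if_pos (mem_range.mp hi)
  · refine sum_congr rfl fun i _ => ?_
    rw [← sum_add_distrib]
    exact sum_congr rfl fun j _ => by split_ifs <;> simp

end Antidiagonal

theorem sum_antidiagonal_sum_antidiagonal_map_eq_zero {R M : Type*} [Semiring R] [AddCommMonoid M]
    [Module R M] (f : ℕ → M →ₗ[R] M) {E : ℕ × ℕ → M} (hE : ∀ n, ∑ q ∈ antidiagonal n, E q = 0)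
    (k : ℕ) :
    ∑ p ∈ antidiagonal k, ∑ q ∈ antidiagonal p.2, f p.1 (E q) = 0 := by
  simp_rw [← map_sum, hE, map_zero, sum_const_zero]

theorem sum_antidiagonal_lie_self {L : Type*} [LieRing L] (m : ℕ) (f : ℕ → L) :
    ∑ p ∈ antidiagonal m, ⁅f p.1, f p.2⁆ = 0 := by
  rw [sum_antidiagonal_eq_diag_add_pairs m fun i j => ⁅f i, f j⁆]
  have hpair : ∀ i j, ⁅f i, f j⁆ + ⁅f j, f i⁆ = 0 := fun i j => by
    rw [← lie_skew (f j) (f i), add_neg_cancel]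
  simp only [lie_self, hpair, ite_self, sum_const_zero, add_zero]

theorem sum_antidiagonal_sum_antidiagonal_jacobi {L : Type*} [LieRing L] (k : ℕ) (u v w : ℕ → L) :
    ∑ p ∈ antidiagonal k, ∑ q ∈ antidiagonal p.2, ⁅u p.1, ⁅v q.1, w q.2⁆⁆ +
      ∑ p ∈ antidiagonal k, ∑ q ∈ antidiagonal p.2, ⁅v p.1, ⁅w q.1, u q.2⁆⁆ +
      ∑ p ∈ antidiagonal k, ∑ q ∈ antidiagonal p.2, ⁅w p.1, ⁅u q.1, v q.2⁆⁆ = 0 := by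
  rw [sum_antidiagonal_sum_antidiagonal_rotate k fun a b c => ⁅v a, ⁅w b, u c⁆⁆,
    sum_antidiagonal_sum_antidiagonal_rotate k fun a b c => ⁅w a, ⁅u b, v c⁆⁆,
    sum_antidiagonal_sum_antidiagonal_rotate k fun a b c => ⁅w b, ⁅u c, v a⁆⁆,
    ← sum_add_distrib, ← sum_add_distrib]
  refine sum_eq_zero fun p _ => ?_
  rw [← sum_add_distrib, ← sum_add_distrib]
  exact sum_eq_zero fun q _ => lie_jacobi _ _ _

theorem exists_forall_of_exists_update {α : Type*} (P : ℕ → (ℕ → α) → Prop)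
    (hlocal : ∀ m f f', (∀ i ≤ m, f i = f' i) → P m f → P m f') (hzero : ∃ f, P 0 f)
    (hstep : ∀ k f, k ≠ 0 → (∀ m < k, P m f) → ∃ a, P k (update f k a)) :
    ∃ f, ∀ m, P m f := by
  obtain ⟨f₀, hf₀⟩ := hzero
  have hextend : ∀ n (f : ℕ → α), (∀ m ≤ n, P m f) →
      ∃ f' : ℕ → α, (∀ m ≤ n + 1, P m f') ∧ ∀ i ≤ n, f' i = f i := by
    intro n f hf
    obtain ⟨a, ha⟩ := hstep (n + 1) f n.succ_ne_zero fun m hm => hf m (by omega)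
    have hagree : ∀ i ≤ n, update f (n + 1) a i = f i :=
      fun i hi => update_of_ne (by omega) _ _
    refine ⟨_, fun m hm => ?_, hagree⟩
    rcases hm.lt_or_eq with hm | rfl
    · exact hlocal m f _ (fun i hi => (hagree i (by omega)).symm) (hf m (by omega))
    · exact ha
  choose next hnext hnext_agree using hextend
  let chain : (n : ℕ) → {f : ℕ → α // ∀ m ≤ n, P m f} := fun n =>
    Nat.rec ⟨f₀, fun m hm => by rwa [Nat.le_zero.mp hm]⟩
      (fun n c => ⟨next n c.1 c.2, hnext n c.1 c.2⟩) n
  have hstable : ∀ n, ∀ i ≤ n, (chain n).1 i = (chain i).1 i := by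
    intro n
    induction n with
    | zero => intro i hi; rw [Nat.le_zero.mp hi]
    | succ n ih =>
      intro i hi
      rcases hi.lt_or_eq with hi | rfl
      · exact (hnext_agree n _ _ i (by omega)).trans (ih i (by omega))
      · rfl
  exact ⟨fun i => (chain i).1 i, fun m => hlocal m _ _ (hstable m) ((chain m).2 m le_rfl)⟩

section CharTwo

variable {M : Type*} [AddCommGroup M]

theorem add_self_eq_zero_of_charTwo (F : Type*) [Ring F] [CharP F 2] [Module F M] (v : M) :
    v + v = 0 := by
  rw [← two_smul F v, CharTwo.two_eq_zero, zero_smul]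

theorem neg_eq_self_of_charTwo (F : Type*) [Ring F] [CharP F 2] [Module F M] (v : M) :
    -v = v :=
  neg_eq_of_add_eq_zero_left (add_self_eq_zero_of_charTwo F v)

theorem eq_of_add_eq_zero_of_charTwo (F : Type*) [Ring F] [CharP F 2] [Module F M] {u v : M}
    (h : u + v = 0) : u = v := by
  rw [eq_neg_of_add_eq_zero_left h, neg_eq_self_of_charTwo F]

theorem add_add_cancel_right_of_charTwo (F : Type*) [Ring F] [CharP F 2] [Module F M]
    (u v : M) : u + v + v = u := by
  rw [add_assoc, add_self_eq_zero_of_charTwo F, add_zero]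

theorem eq_swap_of_map_self_eq_zero_of_charTwo (F : Type*) [Ring F] [CharP F 2] [Module F M]
    {X : Type*} [Add X] (φ : X → X → M) (hleft : ∀ x x' y, φ (x + x') y = φ x y + φ x' y)
    (hright : ∀ x y y', φ x (y + y') = φ x y + φ x y') (hself : ∀ x, φ x x = 0) (x y : X) :
    φ x y = φ y x := by
  have h := hself (x + y)
  rw [hleft, hright, hright, hself, hself, zero_add, add_zero] at h
  exact eq_of_add_eq_zero_of_charTwo F h

theorem lie_comm_of_charTwo (F : Type*) [CommRing F] [CharP F 2] {L : Type*} [LieRing L]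
    [LieAlgebra F L] (u v : L) : ⁅u, v⁆ = ⁅v, u⁆ := by
  rw [← lie_skew, neg_eq_self_of_charTwo F]

end CharTwo

section Deformation

variable {F : Type*} [CommRing F] {g : Type*} [LieRing g] [LieAlgebra F g]

structure IsResLieDerPair (sq : g → g) (D : g →ₗ[F] g) : Prop where
  lie_sq : ∀ x y : g, ⁅sq x, y⁆ = ⁅x, ⁅x, y⁆⁆
  sq_smul : ∀ (a : F) (x : g), sq (a • x) = a ^ 2 • sq x
  sq_add : ∀ x y : g, sq (x + y) = sq x + sq y + ⁅x, y⁆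
  der_lie : ∀ x y : g, D ⁅x, y⁆ = ⁅D x, y⁆ + ⁅x, D y⁆
  der_sq : ∀ x : g, D (sq x) = ⁅x, D x⁆

structure IsTwoCocycle (sq : g → g) (D : g →ₗ[F] g) (φ₂ : g → g → g) (ω₂ : g → g)
    (φ₁ : g →ₗ[F] g) : Prop where
  smul_add_left : ∀ (a : F) (x x' y : g), φ₂ (a • x + x') y = a • φ₂ x y + φ₂ x' y
  smul_add_right : ∀ (a : F) (x y y' : g), φ₂ x (a • y + y') = a • φ₂ x y + φ₂ x y'
  self_eq_zero : ∀ x : g, φ₂ x x = 0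
  quad_smul : ∀ (a : F) (x : g), ω₂ (a • x) = a ^ 2 • ω₂ x
  quad_add : ∀ x y : g, ω₂ (x + y) = ω₂ x + ω₂ y + φ₂ x y
  jacobi : ∀ x y z : g,
    ⁅x, φ₂ y z⁆ + φ₂ ⁅y, z⁆ x + ⁅y, φ₂ z x⁆ + φ₂ ⁅z, x⁆ y + ⁅z, φ₂ x y⁆ + φ₂ ⁅x, y⁆ z = 0
  restricted : ∀ x y : g, ⁅x, φ₂ x y⁆ + φ₂ (sq x) y + φ₂ ⁅x, y⁆ x + ⁅y, ω₂ x⁆ = 0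
  der_lie : ∀ x y : g,
    φ₁ ⁅x, y⁆ + ⁅x, φ₁ y⁆ + ⁅y, φ₁ x⁆ + φ₂ (D x) y + φ₂ x (D y) + D (φ₂ x y) = 0
  der_sq : ∀ x : g, φ₁ (sq x) + ⁅x, φ₁ x⁆ + D (ω₂ x) + φ₂ x (D x) = 0

def IsTwoCoboundary (sq : g → g) (D : g →ₗ[F] g) (φ₂ : g → g → g) (ω₂ : g → g)
    (φ₁ : g →ₗ[F] g) : Prop :=
  ∃ π : g →ₗ[F] g, (∀ x y : g, φ₂ x y = π ⁅x, y⁆ + ⁅x, π y⁆ + ⁅y, π x⁆) ∧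
    (∀ x : g, ω₂ x = π (sq x) + ⁅x, π x⁆) ∧ ∀ x : g, φ₁ x = D (π x) + π (D x)

structure IsFormalDeformation (sq : g → g) (D : g →ₗ[F] g) (μ : ℕ → g → g → g)
    (σ : ℕ → g → g) (Dd : ℕ → g →ₗ[F] g) : Prop where
  smul_add_left : ∀ (i : ℕ) (a : F) (x x' y : g), μ i (a • x + x') y = a • μ i x y + μ i x' y
  smul_add_right : ∀ (i : ℕ) (a : F) (x y y' : g), μ i x (a • y + y') = a • μ i x y + μ i x y'
  self_eq_zero : ∀ (i : ℕ) (x : g), μ i x x = 0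
  bracket_zero : ∀ x y : g, μ 0 x y = ⁅x, y⁆
  sq_zero : ∀ x : g, σ 0 x = sq x
  der_zero : Dd 0 = D
  sq_smul : ∀ (i : ℕ) (a : F) (x : g), σ i (a • x) = a ^ 2 • σ i x
  sq_add : ∀ (i : ℕ) (x y : g), σ i (x + y) = σ i x + σ i y + μ i x y
  jacobi : ∀ (k : ℕ) (x y z : g), ∑ p ∈ antidiagonal k,
    (μ p.1 x (μ p.2 y z) + μ p.1 y (μ p.2 z x) + μ p.1 z (μ p.2 x y)) = 0
  restricted : ∀ (k : ℕ) (x y : g),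
    ∑ p ∈ antidiagonal k, (μ p.1 (σ p.2 x) y + μ p.1 x (μ p.2 x y)) = 0
  der_lie : ∀ (k : ℕ) (x y : g), ∑ p ∈ antidiagonal k,
    (Dd p.1 (μ p.2 x y) + μ p.2 (Dd p.1 x) y + μ p.2 x (Dd p.1 y)) = 0
  der_sq : ∀ (k : ℕ) (x : g),
    ∑ p ∈ antidiagonal k, (Dd p.1 (σ p.2 x) + μ p.2 x (Dd p.1 x)) = 0

/-- The coefficient of `t ^ m` in `(∑ i, t ^ i • π i x)^[2]`. -/
def sqCoeff (sq : g → g) (π : ℕ → g →ₗ[F] g) (m : ℕ) (x : g) : g :=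
  (∑ i ∈ range (m + 1), if 2 * i = m then sq (π i x) else 0) +
    ∑ i ∈ range (m + 1), ∑ j ∈ range (m + 1),
      if i < j ∧ i + j = m then ⁅π i x, π j x⁆ else 0

/- Each defect is the sum of the two sides of one of the equations of order `m` in the
conclusion, so in characteristic 2 it vanishes exactly when that equation holds. -/

def bracketDefect (μ : ℕ → g → g → g) (π : ℕ → g →ₗ[F] g) (m : ℕ) (x y : g) : g :=
  ∑ p ∈ antidiagonal m, (π p.1 (μ p.2 x y) + ⁅π p.1 x, π p.2 y⁆)

def squareDefect (sq : g → g) (σ : ℕ → g → g) (π : ℕ → g →ₗ[F] g) (m : ℕ) (x : g) : g :=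
  ∑ p ∈ antidiagonal m, π p.1 (σ p.2 x) + sqCoeff sq π m x

def derivDefect (D : g →ₗ[F] g) (Dd π : ℕ → g →ₗ[F] g) (m : ℕ) : g →ₗ[F] g :=
  ∑ p ∈ antidiagonal m, π p.1 ∘ₗ Dd p.2 + D ∘ₗ π m

def TrivializesAt (sq : g → g) (D : g →ₗ[F] g) (μ : ℕ → g → g → g) (σ : ℕ → g → g)
    (Dd π : ℕ → g →ₗ[F] g) (m : ℕ) : Prop :=
  (∀ x y : g, bracketDefect μ π m x y = 0) ∧ (∀ x : g, squareDefect sq σ π m x = 0) ∧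
    ∀ x : g, derivDefect D Dd π m x = 0

variable {sq : g → g} {D : g →ₗ[F] g} {μ : ℕ → g → g → g} {σ : ℕ → g → g}
  {Dd π π' : ℕ → g →ₗ[F] g} {k m : ℕ}

theorem derivDefect_apply (x : g) :
    derivDefect D Dd π m x = ∑ p ∈ antidiagonal m, π p.1 (Dd p.2 x) + D (π m x) := by
  simp [derivDefect, LinearMap.sum_apply]

theorem bracketDefect_congr (h : ∀ i ≤ m, π i = π' i) :
    bracketDefect μ π m = bracketDefect μ π' m := by
  ext x y
  refine sum_congr rfl fun p hp => ?_
  rw [h p.1 (antidiagonal.fst_le hp), h p.2 (antidiagonal.snd_le hp)]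

theorem sqCoeff_congr (h : ∀ i ≤ m, π i = π' i) : sqCoeff sq π m = sqCoeff sq π' m := by
  have h' : ∀ i ∈ range (m + 1), π i = π' i :=
    fun i hi => h i (Nat.lt_succ_iff.mp (mem_range.mp hi))
  ext x
  unfold sqCoeff
  congr 1
  · exact sum_congr rfl fun i hi => by rw [h' i hi]
  · exact sum_congr rfl fun i hi => sum_congr rfl fun j hj => by rw [h' i hi, h' j hj]

theorem squareDefect_congr (h : ∀ i ≤ m, π i = π' i) :
    squareDefect sq σ π m = squareDefect sq σ π' m := by
  ext x
  rw [squareDefect, squareDefect, sqCoeff_congr h]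
  congr 1
  exact sum_congr rfl fun p hp => by rw [h p.1 (antidiagonal.fst_le hp)]

theorem derivDefect_congr (h : ∀ i ≤ m, π i = π' i) :
    derivDefect D Dd π m = derivDefect D Dd π' m := by
  rw [derivDefect, derivDefect, h m le_rfl]
  congr 1
  exact sum_congr rfl fun p hp => by rw [h p.1 (antidiagonal.fst_le hp)]

theorem TrivializesAt.congr (h : ∀ i ≤ m, π i = π' i) (ht : TrivializesAt sq D μ σ Dd π m) :
    TrivializesAt sq D μ σ Dd π' m := by
  rwa [TrivializesAt, ← bracketDefect_congr h, ← squareDefect_congr h, ← derivDefect_congr h]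

theorem map_sqCoeff (L : g →+ g) (B : g → g → g) (hsq : ∀ v, L (sq v) = B v v)
    (hlie : ∀ v w, L ⁅v, w⁆ = B v w + B w v) (x : g) :
    L (sqCoeff sq π m x) = ∑ p ∈ antidiagonal m, B (π p.1 x) (π p.2 x) := by
  rw [sum_antidiagonal_eq_diag_add_pairs m fun i j => B (π i x) (π j x), sqCoeff, map_add,
    map_sum, map_sum]
  congr 1
  · exact sum_congr rfl fun i _ => by split_ifs <;> simp [hsq]
  · exact sum_congr rfl fun i _ => by
      rw [map_sum]
      exact sum_congr rfl fun j _ => by split_ifs <;> simp [hlie]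

theorem sqCoeff_smul (hsq : ∀ (a : F) (x : g), sq (a • x) = a ^ 2 • sq x) (a : F) (x : g) :
    sqCoeff sq π m (a • x) = a ^ 2 • sqCoeff sq π m x := by
  simp only [sqCoeff, map_smul, hsq, smul_lie, lie_smul, smul_smul, ← pow_two, smul_add, smul_sum,
    smul_ite, smul_zero]

theorem bracketDefect_smul_add_left
    (hμ : ∀ (i : ℕ) (a : F) (x x' y : g), μ i (a • x + x') y = a • μ i x y + μ i x' y)
    (a : F) (x x' y : g) :
    bracketDefect μ π m (a • x + x') y =
      a • bracketDefect μ π m x y + bracketDefect μ π m x' y := by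
  simp only [bracketDefect, smul_sum, ← sum_add_distrib]
  refine sum_congr rfl fun p _ => ?_
  rw [hμ, map_add, map_smul, map_add, map_smul, add_lie, smul_lie, smul_add]
  abel

theorem bracketDefect_smul_add_right
    (hμ : ∀ (i : ℕ) (a : F) (x y y' : g), μ i x (a • y + y') = a • μ i x y + μ i x y')
    (a : F) (x y y' : g) :
    bracketDefect μ π m x (a • y + y') =
      a • bracketDefect μ π m x y + bracketDefect μ π m x y' := by
  simp only [bracketDefect, smul_sum, ← sum_add_distrib]
  refine sum_congr rfl fun p _ => ?_
  rw [hμ, map_add, map_smul, map_add, map_smul, lie_add, lie_smul, smul_add]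
  abel

theorem bracketDefect_self (hμ : ∀ (i : ℕ) (x : g), μ i x x = 0) (x : g) :
    bracketDefect μ π m x x = 0 := by
  simp [bracketDefect, hμ, sum_antidiagonal_lie_self m fun i => π i x]

theorem squareDefect_smul (hres : IsResLieDerPair sq D) (hdef : IsFormalDeformation sq D μ σ Dd)
    (a : F) (x : g) : squareDefect sq σ π m (a • x) = a ^ 2 • squareDefect sq σ π m x := by
  simp only [squareDefect, sqCoeff_smul hres.sq_smul, hdef.sq_smul, map_smul, smul_add, smul_sum]

variable [CharP F 2]

theorem IsFormalDeformation.comm (hdef : IsFormalDeformation sq D μ σ Dd) (i : ℕ) (x y : g) :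
    μ i x y = μ i y x :=
  eq_swap_of_map_self_eq_zero_of_charTwo F (μ i)
    (fun x x' y => by simpa using hdef.smul_add_left i 1 x x' y)
    (fun x y y' => by simpa using hdef.smul_add_right i 1 x y y') (hdef.self_eq_zero i) x y

theorem sqCoeff_lie (hsq : ∀ x y : g, ⁅sq x, y⁆ = ⁅x, ⁅x, y⁆⁆) (x u : g) :
    ⁅sqCoeff sq π m x, u⁆ = ∑ p ∈ antidiagonal m, ⁅π p.1 x, ⁅π p.2 x, u⁆⁆ :=
  map_sqCoeff (AddMonoidHom.mk' (fun v => ⁅v, u⁆) fun v w => add_lie v w u)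
    (fun v w => ⁅v, ⁅w, u⁆⁆) (fun v => hsq v u)
    (fun v w => by simp [lie_lie, sub_eq_add_neg, neg_eq_self_of_charTwo F]) x

theorem map_sqCoeff_of_derivation (hlie : ∀ x y : g, D ⁅x, y⁆ = ⁅D x, y⁆ + ⁅x, D y⁆)
    (hsq : ∀ x : g, D (sq x) = ⁅x, D x⁆) (x : g) :
    D (sqCoeff sq π m x) = ∑ p ∈ antidiagonal m, ⁅π p.1 x, D (π p.2 x)⁆ :=
  map_sqCoeff D.toAddMonoidHom (fun v w => ⁅v, D w⁆) hsq
    (fun v w => by simp [hlie, lie_comm_of_charTwo F (D v) w, add_comm]) x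

theorem sqCoeff_add (hsq : ∀ x y : g, sq (x + y) = sq x + sq y + ⁅x, y⁆) (x y : g) :
    sqCoeff sq π m (x + y) =
      sqCoeff sq π m x + sqCoeff sq π m y + ∑ p ∈ antidiagonal m, ⁅π p.1 x, π p.2 y⁆ := by
  rw [sum_antidiagonal_eq_diag_add_pairs m fun i j => ⁅π i x, π j y⁆]
  have hdiag : ∀ i, (if 2 * i = m then sq (π i x + π i y) else 0) =
      (if 2 * i = m then sq (π i x) else 0) + (if 2 * i = m then sq (π i y) else 0) +
        if 2 * i = m then ⁅π i x, π i y⁆ else 0 := by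
    intro i; split_ifs <;> simp [hsq]
  have hpair : ∀ i j, (if i < j ∧ i + j = m then ⁅π i x + π i y, π j x + π j y⁆ else 0) =
      (if i < j ∧ i + j = m then ⁅π i x, π j x⁆ else 0) +
        (if i < j ∧ i + j = m then ⁅π i y, π j y⁆ else 0) +
        if i < j ∧ i + j = m then ⁅π i x, π j y⁆ + ⁅π j x, π i y⁆ else 0 := by
    intro i j
    split_ifs
    · rw [add_lie, lie_add, lie_add, lie_comm_of_charTwo F (π i y)]; abel
    · simp
  simp only [sqCoeff, map_add, hdiag, hpair, sum_add_distrib]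
  abel

theorem sum_map_mu_eq_bracketDefect_add (u v : g) : ∑ p ∈ antidiagonal m, π p.1 (μ p.2 u v) =
    bracketDefect μ π m u v + ∑ p ∈ antidiagonal m, ⁅π p.1 u, π p.2 v⁆ := by
  rw [bracketDefect, sum_add_distrib, add_add_cancel_right_of_charTwo F]

theorem sum_map_sigma_eq_squareDefect_add (x : g) : ∑ p ∈ antidiagonal m, π p.1 (σ p.2 x) =
    squareDefect sq σ π m x + sqCoeff sq π m x := by
  rw [squareDefect, add_add_cancel_right_of_charTwo F]

theorem sum_map_der_eq_derivDefect_add (x : g) : ∑ p ∈ antidiagonal m, π p.1 (Dd p.2 x) =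
    derivDefect D Dd π m x + D (π m x) := by
  rw [derivDefect_apply, add_add_cancel_right_of_charTwo F]

theorem bracketDefect_comm (hdef : IsFormalDeformation sq D μ σ Dd) (x y : g) :
    bracketDefect μ π m x y = bracketDefect μ π m y x :=
  eq_swap_of_map_self_eq_zero_of_charTwo F (bracketDefect μ π m)
    (fun x x' y => by simpa using bracketDefect_smul_add_left hdef.smul_add_left 1 x x' y)
    (fun x y y' => by simpa using bracketDefect_smul_add_right hdef.smul_add_right 1 x y y')
    (bracketDefect_self hdef.self_eq_zero) x y

theorem squareDefect_add (hres : IsResLieDerPair sq D) (hdef : IsFormalDeformation sq D μ σ Dd)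
    (x y : g) : squareDefect sq σ π m (x + y) =
      squareDefect sq σ π m x + squareDefect sq σ π m y + bracketDefect μ π m x y := by
  simp only [squareDefect, bracketDefect, sqCoeff_add (F := F) hres.sq_add, hdef.sq_add, map_add,
    sum_add_distrib]
  abel

/- Each of the following expands a triple sum `∑_{a+b+c=k} π_a (…)` that vanishes by an
identity of the deformation. Since the defects of order `< k` vanish, only those of order `k`
survive, next to a remainder built from the `π_i` alone. -/

theorem sum_sum_map_mu_mu (hdef : IsFormalDeformation sq D μ σ Dd) (hπ0 : π 0 = LinearMap.id)
    (hbelow : ∀ m < k, TrivializesAt sq D μ σ Dd π m) (u v w : g) :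
    ∑ p ∈ antidiagonal k, ∑ q ∈ antidiagonal p.2, π p.1 (μ q.1 u (μ q.2 v w)) =
      bracketDefect μ π k u ⁅v, w⁆ + ⁅u, bracketDefect μ π k v w⁆ +
        ∑ p ∈ antidiagonal k, ∑ q ∈ antidiagonal p.2, ⁅π p.1 u, ⁅π q.1 v, π q.2 w⁆⁆ := by
  rw [sum_antidiagonal_sum_antidiagonal_rotate k fun a b c => π a (μ b u (μ c v w))]
  simp_rw [sum_map_mu_eq_bracketDefect_add (F := F)]
  rw [sum_add_distrib, sum_antidiagonal_eq_of_snd_lt fun p _ h => (hbelow _ h).1 _ _,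
    ← sum_antidiagonal_sum_antidiagonal_rotate k fun a b c => ⁅π a u, π b (μ c v w)⁆]
  simp_rw [← lie_sum, sum_map_mu_eq_bracketDefect_add (F := F), lie_add]
  rw [sum_add_distrib, sum_antidiagonal_eq_of_snd_lt fun p _ h => by rw [(hbelow _ h).1, lie_zero],
    hπ0, hdef.bracket_zero]
  simp_rw [lie_sum, LinearMap.id_apply]
  abel

theorem sum_sum_map_mu_sigma (hres : IsResLieDerPair sq D) (hdef : IsFormalDeformation sq D μ σ Dd)
    (hπ0 : π 0 = LinearMap.id) (hbelow : ∀ m < k, TrivializesAt sq D μ σ Dd π m) (x y : g) :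
    ∑ p ∈ antidiagonal k, ∑ q ∈ antidiagonal p.2, π p.1 (μ q.1 (σ q.2 x) y) =
      bracketDefect μ π k (sq x) y + ⁅squareDefect sq σ π k x, y⁆ +
        ∑ p ∈ antidiagonal k, ∑ q ∈ antidiagonal p.2, ⁅π p.1 x, ⁅π q.1 x, π q.2 y⁆⁆ := by
  rw [sum_antidiagonal_sum_antidiagonal_rotate k fun a b c => π a (μ b (σ c x) y)]
  simp_rw [sum_map_mu_eq_bracketDefect_add (F := F)]
  rw [sum_add_distrib, sum_antidiagonal_eq_of_snd_lt fun p _ h => (hbelow _ h).1 _ _,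
    ← sum_antidiagonal_sum_antidiagonal_rotate k fun a b c => ⁅π a (σ c x), π b y⁆,
    sum_antidiagonal_sum_antidiagonal_swap k fun a b c => ⁅π a (σ c x), π b y⁆]
  simp_rw [← sum_lie, sum_map_sigma_eq_squareDefect_add (F := F) (sq := sq), add_lie,
    sqCoeff_lie (F := F) hres.lie_sq]
  rw [sum_add_distrib,
    sum_antidiagonal_eq_of_snd_lt fun p _ h => by rw [(hbelow _ h).2.1, zero_lie],
    ← sum_antidiagonal_sum_antidiagonal_rotate k fun a b c => ⁅π a x, ⁅π b x, π c y⁆⁆,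
    hπ0, hdef.sq_zero]
  simp_rw [LinearMap.id_apply]
  abel

theorem sum_sum_map_der_mu (hdef : IsFormalDeformation sq D μ σ Dd)
    (hbelow : ∀ m < k, TrivializesAt sq D μ σ Dd π m) (x y : g) :
    ∑ p ∈ antidiagonal k, ∑ q ∈ antidiagonal p.2, π p.1 (Dd q.1 (μ q.2 x y)) =
      derivDefect D Dd π k ⁅x, y⁆ + D (bracketDefect μ π k x y) +
        ∑ p ∈ antidiagonal k, D ⁅π p.1 x, π p.2 y⁆ := by
  rw [sum_antidiagonal_sum_antidiagonal_rotate k fun a b c => π a (Dd b (μ c x y))]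
  simp_rw [sum_map_der_eq_derivDefect_add (F := F) (D := D)]
  rw [sum_add_distrib, sum_antidiagonal_eq_of_snd_lt fun p _ h => (hbelow _ h).2.2 _,
    hdef.bracket_zero, ← map_sum,
    ← Nat.sum_antidiagonal_swap (f := fun p => π p.2 (μ p.1 x y))]
  simp only [Prod.fst_swap, Prod.snd_swap]
  rw [sum_map_mu_eq_bracketDefect_add (F := F), map_add, map_sum, add_assoc]

theorem sum_sum_map_mu_der (hdef : IsFormalDeformation sq D μ σ Dd) (hπ0 : π 0 = LinearMap.id)
    (hbelow : ∀ m < k, TrivializesAt sq D μ σ Dd π m) (x y : g) :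
    ∑ p ∈ antidiagonal k, ∑ q ∈ antidiagonal p.2, π p.1 (μ q.2 x (Dd q.1 y)) =
      bracketDefect μ π k x (D y) + ⁅x, derivDefect D Dd π k y⁆ +
        ∑ p ∈ antidiagonal k, ⁅π p.1 x, D (π p.2 y)⁆ := by
  rw [sum_antidiagonal_sum_antidiagonal_swap k fun a b c => π a (μ c x (Dd b y))]
  simp_rw [sum_map_mu_eq_bracketDefect_add (F := F)]
  rw [sum_add_distrib, sum_antidiagonal_eq_of_snd_lt fun p _ h => (hbelow _ h).1 _ _,
    ← sum_antidiagonal_sum_antidiagonal_rotate k fun a b c => ⁅π a x, π b (Dd c y)⁆]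
  simp_rw [← lie_sum, sum_map_der_eq_derivDefect_add (F := F) (D := D), lie_add]
  rw [sum_add_distrib,
    sum_antidiagonal_eq_of_snd_lt fun p _ h => by rw [(hbelow _ h).2.2, lie_zero],
    hπ0, hdef.der_zero, LinearMap.id_apply, add_assoc]

theorem sum_sum_map_der_sigma (hres : IsResLieDerPair sq D) (hdef : IsFormalDeformation sq D μ σ Dd)
    (hbelow : ∀ m < k, TrivializesAt sq D μ σ Dd π m) (x : g) :
    ∑ p ∈ antidiagonal k, ∑ q ∈ antidiagonal p.2, π p.1 (Dd q.1 (σ q.2 x)) =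
      derivDefect D Dd π k (sq x) + D (squareDefect sq σ π k x) +
        ∑ p ∈ antidiagonal k, ⁅π p.1 x, D (π p.2 x)⁆ := by
  rw [sum_antidiagonal_sum_antidiagonal_rotate k fun a b c => π a (Dd b (σ c x))]
  simp_rw [sum_map_der_eq_derivDefect_add (F := F) (D := D)]
  rw [sum_add_distrib, sum_antidiagonal_eq_of_snd_lt fun p _ h => (hbelow _ h).2.2 _,
    hdef.sq_zero, ← map_sum,
    ← Nat.sum_antidiagonal_swap (f := fun p => π p.2 (σ p.1 x))]
  simp only [Prod.fst_swap, Prod.snd_swap]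
  rw [sum_map_sigma_eq_squareDefect_add (F := F) (sq := sq), map_add,
    map_sqCoeff_of_derivation (F := F) hres.der_lie hres.der_sq, add_assoc]

theorem bracketDefect_jacobi (hdef : IsFormalDeformation sq D μ σ Dd) (hπ0 : π 0 = LinearMap.id)
    (hbelow : ∀ m < k, TrivializesAt sq D μ σ Dd π m) (x y z : g) :
    ⁅x, bracketDefect μ π k y z⁆ + bracketDefect μ π k ⁅y, z⁆ x + ⁅y, bracketDefect μ π k z x⁆ +
      bracketDefect μ π k ⁅z, x⁆ y + ⁅z, bracketDefect μ π k x y⁆ +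
      bracketDefect μ π k ⁅x, y⁆ z = 0 := by
  have h := sum_antidiagonal_sum_antidiagonal_map_eq_zero π (hdef.jacobi · x y z) k
  simp only [map_add, sum_add_distrib] at h
  rw [sum_sum_map_mu_mu hdef hπ0 hbelow, sum_sum_map_mu_mu hdef hπ0 hbelow,
    sum_sum_map_mu_mu hdef hπ0 hbelow] at h
  have hjac := sum_antidiagonal_sum_antidiagonal_jacobi k (π · x) (π · y) (π · z)
  rw [bracketDefect_comm hdef ⁅y, z⁆, bracketDefect_comm hdef ⁅z, x⁆,
    bracketDefect_comm hdef ⁅x, y⁆]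
  linear_combination (norm := abel) h - hjac

theorem bracketDefect_restricted (hres : IsResLieDerPair sq D)
    (hdef : IsFormalDeformation sq D μ σ Dd) (hπ0 : π 0 = LinearMap.id)
    (hbelow : ∀ m < k, TrivializesAt sq D μ σ Dd π m) (x y : g) :
    ⁅x, bracketDefect μ π k x y⁆ + bracketDefect μ π k (sq x) y + bracketDefect μ π k ⁅x, y⁆ x +
      ⁅y, squareDefect sq σ π k x⁆ = 0 := by
  have h := sum_antidiagonal_sum_antidiagonal_map_eq_zero π (hdef.restricted · x y) k
  simp only [map_add, sum_add_distrib] at h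
  rw [sum_sum_map_mu_sigma hres hdef hπ0 hbelow, sum_sum_map_mu_mu hdef hπ0 hbelow] at h
  have htwice := add_self_eq_zero_of_charTwo F
    (∑ p ∈ antidiagonal k, ∑ q ∈ antidiagonal p.2, ⁅π p.1 x, ⁅π q.1 x, π q.2 y⁆⁆)
  rw [bracketDefect_comm hdef ⁅x, y⁆, lie_comm_of_charTwo F y]
  linear_combination (norm := abel) h - htwice

theorem derivDefect_lie (hres : IsResLieDerPair sq D) (hdef : IsFormalDeformation sq D μ σ Dd)
    (hπ0 : π 0 = LinearMap.id) (hbelow : ∀ m < k, TrivializesAt sq D μ σ Dd π m) (x y : g) :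
    derivDefect D Dd π k ⁅x, y⁆ + ⁅x, derivDefect D Dd π k y⁆ + ⁅y, derivDefect D Dd π k x⁆ +
      bracketDefect μ π k (D x) y + bracketDefect μ π k x (D y) +
      D (bracketDefect μ π k x y) = 0 := by
  have h := sum_antidiagonal_sum_antidiagonal_map_eq_zero π (hdef.der_lie · x y) k
  simp only [map_add, sum_add_distrib, hdef.comm _ (Dd _ x) y] at h
  rw [sum_sum_map_der_mu hdef hbelow, sum_sum_map_mu_der hdef hπ0 hbelow,
    sum_sum_map_mu_der hdef hπ0 hbelow] at h
  have hleibniz : ∑ p ∈ antidiagonal k, D ⁅π p.1 x, π p.2 y⁆ =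
      ∑ p ∈ antidiagonal k, ⁅π p.1 y, D (π p.2 x)⁆ +
        ∑ p ∈ antidiagonal k, ⁅π p.1 x, D (π p.2 y)⁆ := by
    simp_rw [hres.der_lie, sum_add_distrib, lie_comm_of_charTwo F (D _)]
    rw [← Nat.sum_antidiagonal_swap]
    rfl
  have htwice_yx := add_self_eq_zero_of_charTwo F (∑ p ∈ antidiagonal k, ⁅π p.1 y, D (π p.2 x)⁆)
  have htwice_xy := add_self_eq_zero_of_charTwo F (∑ p ∈ antidiagonal k, ⁅π p.1 x, D (π p.2 y)⁆)
  rw [hleibniz] at h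
  rw [bracketDefect_comm hdef (D x)]
  linear_combination (norm := abel) h - htwice_yx - htwice_xy

theorem derivDefect_sq (hres : IsResLieDerPair sq D) (hdef : IsFormalDeformation sq D μ σ Dd)
    (hπ0 : π 0 = LinearMap.id) (hbelow : ∀ m < k, TrivializesAt sq D μ σ Dd π m) (x : g) :
    derivDefect D Dd π k (sq x) + ⁅x, derivDefect D Dd π k x⁆ + D (squareDefect sq σ π k x) +
      bracketDefect μ π k x (D x) = 0 := by
  have h := sum_antidiagonal_sum_antidiagonal_map_eq_zero π (hdef.der_sq · x) k
  simp only [map_add, sum_add_distrib] at h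
  rw [sum_sum_map_der_sigma hres hdef hbelow, sum_sum_map_mu_der hdef hπ0 hbelow] at h
  have htwice := add_self_eq_zero_of_charTwo F (∑ p ∈ antidiagonal k, ⁅π p.1 x, D (π p.2 x)⁆)
  linear_combination (norm := abel) h - htwice

theorem isTwoCocycle_defects (hres : IsResLieDerPair sq D) (hdef : IsFormalDeformation sq D μ σ Dd)
    (hπ0 : π 0 = LinearMap.id) (hbelow : ∀ m < k, TrivializesAt sq D μ σ Dd π m) :
    IsTwoCocycle sq D (bracketDefect μ π k) (squareDefect sq σ π k) (derivDefect D Dd π k) where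
  smul_add_left := bracketDefect_smul_add_left hdef.smul_add_left
  smul_add_right := bracketDefect_smul_add_right hdef.smul_add_right
  self_eq_zero := bracketDefect_self hdef.self_eq_zero
  quad_smul := squareDefect_smul hres hdef
  quad_add := squareDefect_add hres hdef
  jacobi := bracketDefect_jacobi hdef hπ0 hbelow
  restricted := bracketDefect_restricted hres hdef hπ0 hbelow
  der_lie := derivDefect_lie hres hdef hπ0 hbelow
  der_sq := derivDefect_sq hres hdef hπ0 hbelow

theorem bracketDefect_update_add (hdef : IsFormalDeformation sq D μ σ Dd) (hk : k ≠ 0)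
    (hπ0 : π 0 = LinearMap.id) (P : g →ₗ[F] g) (x y : g) :
    bracketDefect μ (update π k P) k x y + bracketDefect μ (update π k 0) k x y =
      P ⁅x, y⁆ + ⁅x, P y⁆ + ⁅y, P x⁆ := by
  rw [bracketDefect, bracketDefect, ← sum_add_distrib, sum_antidiagonal_eq_ends hk]
  · simp only [update_self, update_of_ne hk.symm, hπ0, hdef.bracket_zero, LinearMap.id_apply,
      LinearMap.zero_apply, zero_lie, lie_zero, add_zero]
    rw [lie_comm_of_charTwo F y]
    linear_combination (norm := abel) add_self_eq_zero_of_charTwo F (μ k x y)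
  · intro p _ h1 h2
    simp only [update_of_ne h1.ne, update_of_ne h2.ne, add_self_eq_zero_of_charTwo F]

theorem sqCoeff_update_add (hk : k ≠ 0) (hπ0 : π 0 = LinearMap.id) (P : g →ₗ[F] g) (x : g) :
    sqCoeff sq (update π k P) k x + sqCoeff sq (update π k 0) k x = ⁅x, P x⁆ := by
  have hdiag : ∀ i, ((if 2 * i = k then sq (update π k P i x) else 0) +
      if 2 * i = k then sq (update π k 0 i x) else 0) = 0 := by
    intro i
    split_ifs with h
    · rw [update_of_ne (by omega), update_of_ne (by omega), add_self_eq_zero_of_charTwo F]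
    · rw [add_zero]
  have hpair : ∀ i j, ((if i < j ∧ i + j = k then ⁅update π k P i x, update π k P j x⁆ else 0) +
      if i < j ∧ i + j = k then ⁅update π k 0 i x, update π k 0 j x⁆ else 0) =
      if i = 0 then if j = k then ⁅x, P x⁆ else 0 else 0 := by
    intro i j
    by_cases hc : i < j ∧ i + j = k
    · by_cases hj : j = k
      · obtain rfl : i = 0 := by omega
        simp [hj, hk, update_of_ne hk.symm, hπ0]
      · rw [if_pos hc, if_pos hc, update_of_ne (by omega : i ≠ k), update_of_ne hj,
          update_of_ne (by omega : i ≠ k), update_of_ne hj, add_self_eq_zero_of_charTwo F]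
        split_ifs <;> rfl
    · rw [if_neg hc, if_neg hc, add_zero]
      split_ifs <;> first | rfl | omega
  rw [sqCoeff, sqCoeff, add_add_add_comm, ← sum_add_distrib, ← sum_add_distrib]
  simp only [hdiag, ← sum_add_distrib, hpair, sum_const_zero, zero_add]
  simp

theorem squareDefect_update_add (hdef : IsFormalDeformation sq D μ σ Dd) (hk : k ≠ 0)
    (hπ0 : π 0 = LinearMap.id) (P : g →ₗ[F] g) (x : g) :
    squareDefect sq σ (update π k P) k x + squareDefect sq σ (update π k 0) k x =
      P (sq x) + ⁅x, P x⁆ := by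
  rw [squareDefect, squareDefect, add_add_add_comm, sqCoeff_update_add hk hπ0,
    ← sum_add_distrib, sum_antidiagonal_eq_ends hk]
  · simp only [update_self, update_of_ne hk.symm, hπ0, hdef.sq_zero, LinearMap.id_apply,
      LinearMap.zero_apply, add_zero, add_self_eq_zero_of_charTwo F]
  · intro p _ h1 _
    simp only [update_of_ne h1.ne, add_self_eq_zero_of_charTwo F]

theorem derivDefect_update_add (hdef : IsFormalDeformation sq D μ σ Dd) (hk : k ≠ 0)
    (hπ0 : π 0 = LinearMap.id) (P : g →ₗ[F] g) (x : g) :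
    derivDefect D Dd (update π k P) k x + derivDefect D Dd (update π k 0) k x =
      D (P x) + P (D x) := by
  rw [derivDefect_apply, derivDefect_apply, add_add_add_comm, ← sum_add_distrib,
    sum_antidiagonal_eq_ends hk]
  · simp only [update_self, update_of_ne hk.symm, hπ0, hdef.der_zero, LinearMap.id_apply,
      LinearMap.zero_apply, map_zero, add_zero, add_self_eq_zero_of_charTwo F]
    rw [add_comm]
  · intro p _ h1 _
    simp only [update_of_ne h1.ne, add_self_eq_zero_of_charTwo F]

theorem trivializesAt_zero (hdef : IsFormalDeformation sq D μ σ Dd) (hπ0 : π 0 = LinearMap.id) :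
    TrivializesAt sq D μ σ Dd π 0 := by
  refine ⟨fun x y => ?_, fun x => ?_, fun x => ?_⟩ <;>
  simp [bracketDefect, squareDefect, sqCoeff, derivDefect_apply, hπ0, hdef.bracket_zero,
    hdef.sq_zero, hdef.der_zero, add_self_eq_zero_of_charTwo F]

theorem exists_trivializesAt_update (hres : IsResLieDerPair sq D)
    (hdef : IsFormalDeformation sq D μ σ Dd)
    (hH2 : ∀ φ₂ ω₂ φ₁, IsTwoCocycle sq D φ₂ ω₂ φ₁ → IsTwoCoboundary sq D φ₂ ω₂ φ₁)
    (hk : k ≠ 0) (hπ0 : π 0 = LinearMap.id) (hbelow : ∀ m < k, TrivializesAt sq D μ σ Dd π m) :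
    ∃ P, TrivializesAt sq D μ σ Dd (update π k P) k := by
  have hagree : ∀ i < k, π i = update π k 0 i :=
    fun i hi => (update_of_ne hi.ne _ _).symm
  have hπ0' : update π k 0 0 = LinearMap.id := by
    rw [← hagree 0 (Nat.pos_of_ne_zero hk), hπ0]
  obtain ⟨P, hφ₂, hω₂, hφ₁⟩ := hH2 _ _ _ (isTwoCocycle_defects hres hdef hπ0' fun m hm =>
    (hbelow m hm).congr fun i hi => hagree i (by omega))
  refine ⟨P, fun x y => ?_, fun x => ?_, fun x => ?_⟩
  · have h := bracketDefect_update_add hdef hk hπ0 P x y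
    rwa [hφ₂, add_eq_right] at h
  · have h := squareDefect_update_add hdef hk hπ0 P x
    rwa [hω₂, add_eq_right] at h
  · have h := derivDefect_update_add hdef hk hπ0 P x
    rwa [hφ₁, add_eq_right] at h

theorem IsFormalDeformation.exists_trivializesAt (hres : IsResLieDerPair sq D)
    (hdef : IsFormalDeformation sq D μ σ Dd)
    (hH2 : ∀ φ₂ ω₂ φ₁, IsTwoCocycle sq D φ₂ ω₂ φ₁ → IsTwoCoboundary sq D φ₂ ω₂ φ₁) :
    ∃ π : ℕ → g →ₗ[F] g, π 0 = LinearMap.id ∧ ∀ k, TrivializesAt sq D μ σ Dd π k := by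
  obtain ⟨π, hπ⟩ := exists_forall_of_exists_update
    (fun m π => π 0 = LinearMap.id ∧ TrivializesAt sq D μ σ Dd π m)
    (fun m π π' h hπ => ⟨h 0 m.zero_le ▸ hπ.1, hπ.2.congr h⟩)
    ⟨fun _ => LinearMap.id, rfl, trivializesAt_zero hdef rfl⟩
    fun k π hk hbelow => by
      obtain ⟨P, hP⟩ := exists_trivializesAt_update hres hdef hH2 hk
        (hbelow 0 (Nat.pos_of_ne_zero hk)).1 fun m hm => (hbelow m hm).2
      exact ⟨P, (update_of_ne hk.symm _ _).trans (hbelow 0 (Nat.pos_of_ne_zero hk)).1, hP⟩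
  exact ⟨π, (hπ 0).1, fun k => (hπ k).2⟩

end Deformation

/-- if every 2-cocycle of the ResLieDer pair `((g,[2]),D)` with adjoint
coefficients is a 2-coboundary, then `((g,[2]),D)` is rigid. -/
theorem stmt8
    {F : Type*} [Field F] [CharP F 2]
    {g : Type*} [LieRing g] [LieAlgebra F g]
    (sq : g → g)
    (hsq_ad : ∀ x y : g, ⁅sq x, y⁆ = ⁅x, ⁅x, y⁆⁆)
    (hsq_smul : ∀ (a : F) (x : g), sq (a • x) = a ^ 2 • sq x)
    (hsq_add : ∀ x y : g, sq (x + y) = sq x + sq y + ⁅x, y⁆)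
    (D : g →ₗ[F] g)
    (hD_br : ∀ x y : g, D ⁅x, y⁆ = ⁅D x, y⁆ + ⁅x, D y⁆)
    (hD_sq : ∀ x : g, D (sq x) = ⁅x, D x⁆)
    -- every 2-cocycle with adjoint coefficients is a 2-coboundary:
    (H2 : ∀ (φ₂ : g → g → g) (ω₂ : g → g) (φ₁ : g →ₗ[F] g),
      (∀ (a : F) (x x' y : g), φ₂ (a • x + x') y = a • φ₂ x y + φ₂ x' y) →
      (∀ (a : F) (x y y' : g), φ₂ x (a • y + y') = a • φ₂ x y + φ₂ x y') →
      (∀ x : g, φ₂ x x = 0) →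
      (∀ (a : F) (x : g), ω₂ (a • x) = a ^ 2 • ω₂ x) →
      (∀ x y : g, ω₂ (x + y) = ω₂ x + ω₂ y + φ₂ x y) →
      (∀ x y z : g,
        ⁅x, φ₂ y z⁆ + φ₂ ⁅y, z⁆ x + ⁅y, φ₂ z x⁆ + φ₂ ⁅z, x⁆ y +
          ⁅z, φ₂ x y⁆ + φ₂ ⁅x, y⁆ z = 0) →
      (∀ x y : g, ⁅x, φ₂ x y⁆ + φ₂ (sq x) y + φ₂ ⁅x, y⁆ x + ⁅y, ω₂ x⁆ = 0) →
      (∀ x y : g,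
        φ₁ ⁅x, y⁆ + ⁅x, φ₁ y⁆ + ⁅y, φ₁ x⁆ +
          φ₂ (D x) y + φ₂ x (D y) + D (φ₂ x y) = 0) →
      (∀ x : g, φ₁ (sq x) + ⁅x, φ₁ x⁆ + D (ω₂ x) + φ₂ x (D x) = 0) →
      ∃ π : g →ₗ[F] g,
        (∀ x y : g, φ₂ x y = π ⁅x, y⁆ + ⁅x, π y⁆ + ⁅y, π x⁆) ∧
        (∀ x : g, ω₂ x = π (sq x) + ⁅x, π x⁆) ∧
        (∀ x : g, φ₁ x = D (π x) + π (D x))) :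
    -- rigidity: every 1-parameter formal deformation is trivial
    ∀ (μ : ℕ → g → g → g) (σ : ℕ → g → g) (Dd : ℕ → g →ₗ[F] g),
      (∀ (i : ℕ) (a : F) (x x' y : g), μ i (a • x + x') y = a • μ i x y + μ i x' y) →
      (∀ (i : ℕ) (a : F) (x y y' : g), μ i x (a • y + y') = a • μ i x y + μ i x y') →
      (∀ (i : ℕ) (x : g), μ i x x = 0) →
      (∀ x y : g, μ 0 x y = ⁅x, y⁆) →
      (∀ x : g, σ 0 x = sq x) →
      (Dd 0 = D) →
      (∀ (i : ℕ) (a : F) (x : g), σ i (a • x) = a ^ 2 • σ i x) →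
      (∀ (i : ℕ) (x y : g), σ i (x + y) = σ i x + σ i y + μ i x y) →
      (∀ (k : ℕ) (x y z : g),
        ∑ p ∈ Finset.HasAntidiagonal.antidiagonal k,
          (μ p.1 x (μ p.2 y z) + μ p.1 y (μ p.2 z x) + μ p.1 z (μ p.2 x y)) = 0) →
      (∀ (k : ℕ) (x y : g),
        ∑ p ∈ Finset.HasAntidiagonal.antidiagonal k, (μ p.1 (σ p.2 x) y + μ p.1 x (μ p.2 x y)) = 0) →
      (∀ (k : ℕ) (x y : g),
        ∑ p ∈ Finset.HasAntidiagonal.antidiagonal k,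
          (Dd p.1 (μ p.2 x y) + μ p.2 (Dd p.1 x) y + μ p.2 x (Dd p.1 y)) = 0) →
      (∀ (k : ℕ) (x : g),
        ∑ p ∈ Finset.HasAntidiagonal.antidiagonal k, (Dd p.1 (σ p.2 x) + μ p.2 x (Dd p.1 x)) = 0) →
      ∃ π : ℕ → g →ₗ[F] g, π 0 = LinearMap.id ∧
        ∀ (k : ℕ) (x y : g),
          (∑ p ∈ Finset.HasAntidiagonal.antidiagonal k, π p.1 (μ p.2 x y) =
            ∑ p ∈ Finset.HasAntidiagonal.antidiagonal k, ⁅π p.1 x, π p.2 y⁆) ∧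
          (∑ p ∈ Finset.HasAntidiagonal.antidiagonal k, π p.1 (σ p.2 x) =
            (∑ i ∈ Finset.range (k + 1), if 2 * i = k then sq (π i x) else 0) +
              ∑ i ∈ Finset.range (k + 1), ∑ j ∈ Finset.range (k + 1),
                if i < j ∧ i + j = k then ⁅π i x, π j x⁆ else 0) ∧
          (∑ p ∈ Finset.HasAntidiagonal.antidiagonal k, π p.1 (Dd p.2 x) = D (π k x)) := by
  intro μ σ Dd hμl hμr hμalt hμ0 hσ0 hDd0 hσ_smul hσ_add hJ hR hDL hDS
  obtain ⟨π, hπ0, hπ⟩ := IsFormalDeformation.exists_trivializesAt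
    ⟨hsq_ad, hsq_smul, hsq_add, hD_br, hD_sq⟩
    ⟨hμl, hμr, hμalt, hμ0, hσ0, hDd0, hσ_smul, hσ_add, hJ, hR, hDL, hDS⟩
    fun φ₂ ω₂ φ₁ h => H2 φ₂ ω₂ φ₁ h.smul_add_left h.smul_add_right h.self_eq_zero h.quad_smul
      h.quad_add h.jacobi h.restricted h.der_lie h.der_sq
  refine ⟨π, hπ0, fun k x y => ⟨?_, ?_, ?_⟩⟩
  · exact eq_of_add_eq_zero_of_charTwo F (by rw [← sum_add_distrib]; exact (hπ k).1 x y)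
  · exact eq_of_add_eq_zero_of_charTwo F ((hπ k).2.1 x)
  · exact eq_of_add_eq_zero_of_charTwo F (by rw [← derivDefect_apply]; exact (hπ k).2.2 x)
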